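/- arXiv:1507.05031 — 6 statements merged into one kernel-verified Lean document; each statement's English description precedes it below -/
import Mathlib

section
/- The estimator E_4 = (1/(N^{\underline{4}} N³))(N^{\underline{2}} Σ_4 − 4Σ_2²) + (2/(N^{\underline{4}} N^{\underline{2}} N²))Σ_2², with Σ_4 = N·S_4 − 4S_3S_1 + 3S_2², is an unbiased estimator of Var(E_2): E[E_4] = (1/N³)(J_4 − 4J_3J_1 + 3J_2² − 4(J_2 − J_1²)²) + (2/(N^{\underline{2}} N²))(J_2 − J_1²)². -/
/-!
Both `Σ₂²` and `Σ₄` are polynomials of degree four in the samples. Expanding products of power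
sums `S_p = ∑ᵢ wᵢ^p` into sums over tuples of pairwise distinct indices,
`∑_{i₁,…,i_k distinct} ∏ᵣ w_{iᵣ}^{aᵣ}`, turns them into integer combinations of such sums, and by
independence each of these has expectation `N(N-1)⋯(N-k+1) ∏ᵣ J_{aᵣ}`. This gives `E[Σ₄]` and
`E[Σ₂²]` in closed form, and the estimator is a fixed linear combination of the two.
-/

open Finset MeasureTheory ProbabilityTheory

theorem Matrix.cons_add_single_zero {M : Type*} [AddZeroClass M] {k : ℕ} (n c : M)
    (v : Fin k → M) : vecCons n v + Pi.single 0 c = vecCons (n + c) v := by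
  ext r
  cases r using Fin.cases <;> simp

theorem Matrix.cons_add_single_succ {M : Type*} [AddZeroClass M] {k : ℕ} (n c : M)
    (v : Fin k → M) (j : Fin k) :
    vecCons n v + Pi.single j.succ c = vecCons n (v + Pi.single j c) := by
  ext r
  cases r using Fin.cases <;> simp [Pi.single_apply]

section PowerSums

variable {ι R : Type*} [Fintype ι] [CommSemiring R]

def powerSum (x : ι → R) (p : ℕ) : R := ∑ i, x i ^ p

noncomputable def distinctSum [DecidableEq ι] {k : ℕ} (x : ι → R) (a : Fin k → ℕ) : R :=
  ∑ e : Fin k ↪ ι, ∏ r, x (e r) ^ a r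

theorem distinctSum_of_isEmpty [DecidableEq ι] (x : ι → R) (a : Fin 0 → ℕ) :
    distinctSum x a = 1 := by
  simp [distinctSum]

theorem distinctSum_eq_of_eq_comp_equiv [DecidableEq ι] {k : ℕ} (x : ι → R) {a b : Fin k → ℕ}
    (σ : Fin k ≃ Fin k) (h : a = b ∘ σ) : distinctSum x a = distinctSum x b := by
  subst h
  unfold distinctSum
  refine Fintype.sum_equiv (Equiv.embeddingCongr σ (Equiv.refl ι)) _ _ fun e => ?_
  exact Fintype.prod_equiv σ _ _ fun r => by simp

variable [DecidableEq ι]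

/-- A new index either coincides with one of the `k` distinct indices, raising that exponent by
`c`, or differs from all of them, giving a tuple of `k + 1` distinct indices. -/
theorem powerSum_mul_distinctSum {k : ℕ} (x : ι → R) (c : ℕ) (a : Fin k → ℕ) :
    powerSum x c * distinctSum x a
      = ∑ r, distinctSum x (a + Pi.single r c) + distinctSum x (Matrix.vecCons c a) := by
  unfold powerSum distinctSum
  rw [← (Equiv.embeddingFinSucc k ι).symm.sum_comp, Fintype.sum_sigma, mul_sum]
  conv_rhs => rw [sum_comm]
  rw [← sum_add_distrib (s := (univ : Finset (Fin k ↪ ι)))]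
  refine sum_congr rfl fun e _ => ?_
  rw [sum_mul, ← sum_add_sum_compl (univ.map e), sum_map]
  congr 1
  · refine sum_congr rfl fun r _ => ?_
    simp only [Pi.add_apply, pow_add, prod_mul_distrib]
    rw [mul_comm, Fintype.prod_eq_single (f := fun s => x (e s) ^ (Pi.single r c : Fin k → ℕ) s) r
      fun s hs => by simp [hs]]
    simp
  · rw [← sum_coe_sort]
    refine Fintype.sum_equiv (Equiv.subtypeEquivRight fun i => by simp) _ _ fun i => ?_
    simp [Fin.prod_univ_succ]

theorem powerSum_eq_distinctSum (x : ι → R) (p : ℕ) : powerSum x p = distinctSum x ![p] := by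
  simpa [distinctSum_of_isEmpty] using powerSum_mul_distinctSum x p ![]

theorem powerSum_mul_powerSum (x : ι → R) (b c : ℕ) :
    powerSum x b * powerSum x c = distinctSum x ![b + c] + distinctSum x ![b, c] := by
  rw [powerSum_eq_distinctSum x c, powerSum_mul_distinctSum, Fin.sum_univ_one,
    Matrix.cons_add_single_zero, add_comm c]

theorem powerSum_two_mul_sq_powerSum_one (x : ι → R) :
    powerSum x 2 * powerSum x 1 ^ 2 = distinctSum x ![4] + distinctSum x ![2, 2]
      + 2 * distinctSum x ![3, 1] + distinctSum x ![2, 1, 1] := by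
  rw [sq, powerSum_mul_powerSum]
  simp only [mul_add, powerSum_mul_distinctSum, Fin.sum_univ_succ, Fin.sum_univ_zero,
    Matrix.cons_add_single_zero, Matrix.cons_add_single_succ, Nat.reduceAdd, add_zero]
  rw [distinctSum_eq_of_eq_comp_equiv x (a := ![1, 3]) (b := ![3, 1]) (Equiv.swap 0 1) (by decide)]
  ring

theorem powerSum_one_pow_four (x : ι → R) :
    powerSum x 1 ^ 4 = distinctSum x ![4] + 4 * distinctSum x ![3, 1]
      + 3 * distinctSum x ![2, 2] + 6 * distinctSum x ![2, 1, 1] + distinctSum x ![1, 1, 1, 1] := by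
  rw [show powerSum x 1 ^ 4 = powerSum x 1 * (powerSum x 1 * (powerSum x 1 * powerSum x 1)) by
    ring, powerSum_mul_powerSum]
  simp only [mul_add, powerSum_mul_distinctSum, Fin.sum_univ_succ, Fin.sum_univ_zero,
    Matrix.cons_add_single_zero, Matrix.cons_add_single_succ, Nat.reduceAdd, add_zero]
  rw [distinctSum_eq_of_eq_comp_equiv x (a := ![1, 3]) (b := ![3, 1]) (Equiv.swap 0 1) (by decide),
    distinctSum_eq_of_eq_comp_equiv x (a := ![1, 2, 1]) (b := ![2, 1, 1]) (Equiv.swap 0 1)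
      (by decide),
    distinctSum_eq_of_eq_comp_equiv x (a := ![1, 1, 2]) (b := ![2, 1, 1]) (finRotate 3) (by decide)]
  ring

end PowerSums

section Sigma

variable {ι R : Type*} [Fintype ι] [DecidableEq ι] [CommRing R]

/-- `Σ₂` of the paper. -/
def sigmaTwo (x : ι → R) : R := Fintype.card ι * powerSum x 2 - powerSum x 1 ^ 2

/-- `Σ₄` of the paper. -/
def sigmaFour (x : ι → R) : R :=
  Fintype.card ι * powerSum x 4 - 4 * powerSum x 3 * powerSum x 1 + 3 * powerSum x 2 ^ 2

theorem sigmaFour_eq (x : ι → R) :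
    sigmaFour x = (Fintype.card ι - 1) * distinctSum x ![4] - 4 * distinctSum x ![3, 1]
      + 3 * distinctSum x ![2, 2] := by
  rw [sigmaFour, mul_assoc, powerSum_mul_powerSum, sq, powerSum_mul_powerSum,
    powerSum_eq_distinctSum x 4]
  ring

theorem sigmaTwo_sq_eq (x : ι → R) :
    sigmaTwo x ^ 2 = (Fintype.card ι - 1) ^ 2 * distinctSum x ![4]
      + ((Fintype.card ι : R) ^ 2 - 2 * Fintype.card ι + 3) * distinctSum x ![2, 2]
      - 4 * (Fintype.card ι - 1) * distinctSum x ![3, 1]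
      - 2 * (Fintype.card ι - 3) * distinctSum x ![2, 1, 1] + distinctSum x ![1, 1, 1, 1] := by
  rw [sigmaTwo]
  linear_combination (Fintype.card ι : R) ^ 2 * powerSum_mul_powerSum x 2 2
    - 2 * Fintype.card ι * powerSum_two_mul_sq_powerSum_one x + powerSum_one_pow_four x

end Sigma

theorem MeasureTheory.MemLp.integrable_pow_of_le {α : Type*} {mα : MeasurableSpace α}
    {μ : Measure α} [IsFiniteMeasure μ] {f : α → ℝ} {p : ENNReal} {q : ℕ} (hf : MemLp f p μ)
    (hq : (q : ENNReal) ≤ p) : Integrable (fun x => f x ^ q) μ :=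
  (integrable_norm_iff (hf.1.pow q)).1 <| by
    simpa [norm_pow] using (hf.mono_exponent hq).integrable_norm_pow'

namespace ProbabilityTheory.iIndepFun

variable {Ω ι κ : Type*} {mΩ : MeasurableSpace Ω} {μ : Measure Ω} {X : ι → Ω → ℝ}

theorem integrable_finsetProd (hX : iIndepFun X μ) (hint : ∀ i, Integrable (X i) μ)
    (s : Finset ι) : Integrable (∏ i ∈ s, X i) μ := by
  classical
  have := hX.isProbabilityMeasure
  induction s using Finset.induction_on with
  | empty => exact integrable_const 1
  | insert i s hi ih =>
    rw [prod_insert hi, mul_comm]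
    exact (hX.indepFun_finsetProd_of_notMem₀ (fun j => (hint j).aemeasurable) hi).integrable_mul
      ih (hint i)

theorem precomp_pow (hX : iIndepFun X μ) {g : κ → ι} (hg : g.Injective) (a : κ → ℕ) :
    iIndepFun (fun r ω => X (g r) ω ^ a r) μ :=
  (hX.precomp hg).comp (fun r x => x ^ a r) fun _ => by fun_prop

end ProbabilityTheory.iIndepFun

section Expectation

variable {Ω ι κ : Type*} {mΩ : MeasurableSpace Ω} {μ : Measure Ω} {w : ι → Ω → ℝ} {d : ℕ}
  (hw : iIndepFun w μ) (hint : ∀ i, ∀ q ≤ d, Integrable (fun ω => w i ω ^ q) μ)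
include hw hint

theorem integrable_prod_pow_of_injective [Fintype κ] {g : κ → ι} (hg : g.Injective)
    {a : κ → ℕ} (ha : ∀ r, a r ≤ d) : Integrable (fun ω => ∏ r, w (g r) ω ^ a r) μ := by
  simpa [prod_fn] using
    (hw.precomp_pow hg a).integrable_finsetProd (fun r => hint (g r) (a r) (ha r)) univ

theorem integrable_distinctSum [Fintype ι] [DecidableEq ι] {k : ℕ} {a : Fin k → ℕ}
    (ha : ∀ r, a r ≤ d) : Integrable (fun ω => distinctSum (w · ω) a) μ :=
  integrable_finsetSum _ fun e _ => integrable_prod_pow_of_injective hw hint e.injective ha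

variable {m : ℕ → ℝ} (hmom : ∀ i, ∀ q ≤ d, ∫ ω, w i ω ^ q ∂μ = m q)
include hmom

theorem integral_prod_pow_of_injective [Fintype κ] {g : κ → ι} (hg : g.Injective)
    {a : κ → ℕ} (ha : ∀ r, a r ≤ d) : ∫ ω, ∏ r, w (g r) ω ^ a r ∂μ = ∏ r, m (a r) := by
  rw [(hw.precomp_pow hg a).integral_fun_prod_eq_prod_integral
    fun r => (hint (g r) (a r) (ha r)).aestronglyMeasurable]
  exact prod_congr rfl fun r _ => hmom (g r) (a r) (ha r)

theorem integral_distinctSum [Fintype ι] [DecidableEq ι] {k : ℕ} {a : Fin k → ℕ}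
    (ha : ∀ r, a r ≤ d) :
    ∫ ω, distinctSum (w · ω) a ∂μ = (Fintype.card ι).descFactorial k * ∏ r, m (a r) := by
  unfold distinctSum
  rw [integral_finsetSum _ fun e _ => integrable_prod_pow_of_injective hw hint e.injective ha,
    sum_congr rfl fun e _ => integral_prod_pow_of_injective hw hint hmom e.injective ha]
  simp [Fintype.card_embedding_eq]

end Expectation

section SigmaExpectation

variable {Ω ι : Type*} {mΩ : MeasurableSpace Ω} {μ : Measure Ω} [Fintype ι] [DecidableEq ι]
  {w : ι → Ω → ℝ} (hw : iIndepFun w μ)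
  (hint : ∀ i, ∀ q ≤ 4, Integrable (fun ω => w i ω ^ q) μ)
include hw hint

theorem integrable_sigmaFour : Integrable (fun ω => sigmaFour (w · ω)) μ := by
  have := integrable_distinctSum hw hint (a := ![4]) (by decide)
  have := integrable_distinctSum hw hint (a := ![3, 1]) (by decide)
  have := integrable_distinctSum hw hint (a := ![2, 2]) (by decide)
  simp_rw [sigmaFour_eq]
  fun_prop

theorem integrable_sigmaTwo_sq : Integrable (fun ω => sigmaTwo (w · ω) ^ 2) μ := by
  have := integrable_distinctSum hw hint (a := ![4]) (by decide)
  have := integrable_distinctSum hw hint (a := ![3, 1]) (by decide)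
  have := integrable_distinctSum hw hint (a := ![2, 2]) (by decide)
  have := integrable_distinctSum hw hint (a := ![2, 1, 1]) (by decide)
  have := integrable_distinctSum hw hint (a := ![1, 1, 1, 1]) (by decide)
  simp_rw [sigmaTwo_sq_eq]
  fun_prop

variable {J : ℕ → ℝ} (hmom : ∀ i, ∀ q ≤ 4, ∫ ω, w i ω ^ q ∂μ = J q)
include hmom

theorem integral_sigmaFour :
    ∫ ω, sigmaFour (w · ω) ∂μ
      = Fintype.card ι * (Fintype.card ι - 1) * (J 4 - 4 * J 3 * J 1 + 3 * J 2 ^ 2) := by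
  have := integrable_distinctSum hw hint (a := ![4]) (by decide)
  have := integrable_distinctSum hw hint (a := ![3, 1]) (by decide)
  have := integrable_distinctSum hw hint (a := ![2, 2]) (by decide)
  simp_rw [sigmaFour_eq]
  simp (disch := fun_prop) only [integral_add, integral_sub, integral_const_mul]
  rw [integral_distinctSum hw hint hmom (by decide), integral_distinctSum hw hint hmom (by decide),
    integral_distinctSum hw hint hmom (by decide)]
  simp only [← descPochhammer_eval_eq_descFactorial ℝ, descPochhammer_succ_eval,
    descPochhammer_zero, Polynomial.eval_one, Fin.prod_univ_succ, Fin.prod_univ_zero,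
    Matrix.cons_val_zero, Matrix.cons_val_succ, Nat.cast_one, Nat.cast_zero]
  ring

theorem integral_sigmaTwo_sq :
    ∫ ω, sigmaTwo (w · ω) ^ 2 ∂μ
      = Fintype.card ι * (Fintype.card ι - 1)
        * ((Fintype.card ι - 1) * (J 4 - 4 * J 3 * J 1 + 6 * J 2 * J 1 ^ 2 - 3 * J 1 ^ 4)
          + ((Fintype.card ι : ℝ) ^ 2 - 2 * Fintype.card ι + 3) * (J 2 - J 1 ^ 2) ^ 2) := by
  have := integrable_distinctSum hw hint (a := ![4]) (by decide)
  have := integrable_distinctSum hw hint (a := ![3, 1]) (by decide)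
  have := integrable_distinctSum hw hint (a := ![2, 2]) (by decide)
  have := integrable_distinctSum hw hint (a := ![2, 1, 1]) (by decide)
  have := integrable_distinctSum hw hint (a := ![1, 1, 1, 1]) (by decide)
  simp_rw [sigmaTwo_sq_eq]
  simp (disch := fun_prop) only [integral_add, integral_sub, integral_const_mul]
  rw [integral_distinctSum hw hint hmom (by decide), integral_distinctSum hw hint hmom (by decide),
    integral_distinctSum hw hint hmom (by decide), integral_distinctSum hw hint hmom (by decide),
    integral_distinctSum hw hint hmom (by decide)]
  simp only [← descPochhammer_eval_eq_descFactorial ℝ, descPochhammer_succ_eval,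
    descPochhammer_zero, Polynomial.eval_one, Fin.prod_univ_succ, Fin.prod_univ_zero,
    Matrix.cons_val_zero, Matrix.cons_val_succ, Nat.cast_ofNat, Nat.cast_one, Nat.cast_zero]
  ring

end SigmaExpectation

theorem e4_unbiased_general
    {Ω : Type*} [MeasureSpace Ω] [IsProbabilityMeasure (ℙ : Measure Ω)]
    (N : ℕ) (hN : 4 ≤ N) (w : Fin N → Ω → ℝ) (J : ℕ → ℝ)
    (hindep : iIndepFun w ℙ)
    (hL4 : ∀ i, MemLp (w i) 4 ℙ)
    (hmom : ∀ (i : Fin N) (q : ℕ), q ≤ 4 → (∫ ω, (w i ω) ^ q ∂ℙ) = J q) :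
    (∫ ω,
        (let S : ℕ → ℝ := fun p => ∑ j : Fin N, w j ω ^ p
         let Sig2 : ℝ := (N : ℝ) * S 2 - S 1 ^ 2
         let Sig4 : ℝ := (N : ℝ) * S 4 - 4 * S 3 * S 1 + 3 * S 2 ^ 2
         let d2 : ℝ := (N : ℝ) * ((N : ℝ) - 1)
         let d4 : ℝ := (N : ℝ) * ((N : ℝ) - 1) * ((N : ℝ) - 2) * ((N : ℝ) - 3)
         (1 / (d4 * (N : ℝ) ^ 3)) * (d2 * Sig4 - 4 * Sig2 ^ 2)
           + (2 / (d4 * d2 * (N : ℝ) ^ 2)) * Sig2 ^ 2) ∂ℙ)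
      = (1 / (N : ℝ) ^ 3)
          * (J 4 - 4 * J 3 * J 1 + 3 * J 2 ^ 2 - 4 * (J 2 - J 1 ^ 2) ^ 2)
        + (2 / ((N : ℝ) * ((N : ℝ) - 1) * (N : ℝ) ^ 2)) * (J 2 - J 1 ^ 2) ^ 2 := by
  have hint : ∀ i, ∀ q ≤ 4, Integrable (fun ω => w i ω ^ q) ℙ := fun i q hq =>
    (hL4 i).integrable_pow_of_le (by exact_mod_cast hq)
  have := integrable_sigmaFour hindep hint
  have := integrable_sigmaTwo_sq hindep hint
  have hN' : (4 : ℝ) ≤ N := by exact_mod_cast hN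
  set n : ℝ := (N : ℝ)
  calc _ = ∫ ω, (1 / (n * (n - 1) * (n - 2) * (n - 3) * n ^ 3))
              * (n * (n - 1) * sigmaFour (w · ω) - 4 * sigmaTwo (w · ω) ^ 2)
            + (2 / (n * (n - 1) * (n - 2) * (n - 3) * (n * (n - 1)) * n ^ 2))
              * sigmaTwo (w · ω) ^ 2 ∂ℙ := by
        simp [sigmaFour, sigmaTwo, powerSum, n]
    _ = _ := by
      simp (disch := fun_prop) only [integral_add, integral_sub, integral_const_mul]
      rw [integral_sigmaFour hindep hint hmom, integral_sigmaTwo_sq hindep hint hmom,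
        Fintype.card_fin]
      have : n - 1 ≠ 0 := by linarith
      have : n - 2 ≠ 0 := by linarith
      have : n - 3 ≠ 0 := by linarith
      have : n ≠ 0 := by linarith
      field_simp
      ring

/-- The estimator `E₄ = (N^{\underline 2} Σ₄ − 4Σ₂²)/(N^{\underline 4} N³)
+ 2Σ₂²/(N^{\underline 4} N^{\underline 2} N²)` is an unbiased estimator of `Var(E₂)`. -/
theorem e4_unbiased
    {Ω : Type*} [MeasureSpace Ω] [IsProbabilityMeasure (ℙ : Measure Ω)]
    (N : ℕ) (hN : 4 ≤ N) (w : Fin N → Ω → ℝ) (J : ℕ → ℝ)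
    (hindep : iIndepFun w ℙ)
    (hident : ∀ i j, IdentDistrib (w i) (w j) ℙ ℙ)
    (hL4 : ∀ i, MemLp (w i) 4 ℙ)
    (hmom : ∀ (i : Fin N) (q : ℕ), q ≤ 4 → (∫ ω, (w i ω) ^ q ∂ℙ) = J q) :
    (∫ ω,
        (let S : ℕ → ℝ := fun p => ∑ j : Fin N, w j ω ^ p
         let Sig2 : ℝ := (N : ℝ) * S 2 - S 1 ^ 2
         let Sig4 : ℝ := (N : ℝ) * S 4 - 4 * S 3 * S 1 + 3 * S 2 ^ 2
         let d2 : ℝ := (N : ℝ) * ((N : ℝ) - 1)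
         let d4 : ℝ := (N : ℝ) * ((N : ℝ) - 1) * ((N : ℝ) - 2) * ((N : ℝ) - 3)
         (1 / (d4 * (N : ℝ) ^ 3)) * (d2 * Sig4 - 4 * Sig2 ^ 2)
           + (2 / (d4 * d2 * (N : ℝ) ^ 2)) * Sig2 ^ 2) ∂ℙ)
      = (1 / (N : ℝ) ^ 3)
          * (J 4 - 4 * J 3 * J 1 + 3 * J 2 ^ 2 - 4 * (J 2 - J 1 ^ 2) ^ 2)
        + (2 / ((N : ℝ) * ((N : ℝ) - 1) * (N : ℝ) ^ 2)) * (J 2 - J 1 ^ 2) ^ 2 :=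
  e4_unbiased_general N hN w J hindep hL4 hmom
end

section
/- For a real random variable w with finite fourth moment, writing w = J_1 + u with E[u] = 0: (a) J_2 − J_1² = E[u²]; (b) J_4 − 4J_3J_1 + 3J_2² = E[u⁴] + 3(E[u²])²; (c) J_4 − 4J_3J_1 + 3J_2² − 4(J_2 − J_1²)² = (1/2)E[(u(X)² − u(Y)²)²] where X, Y are independent copies; in particular both (b) and (c) are nonnegative. -/
/-!
(a) and (b) are the binomial expansions of `E[u²]` and `E[u⁴]` in the raw moments `J_k`.
For (c), put `v = u²`. Since `v(X)` and `v(Y)` are independent with the law of `v(w)`,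
`v(X) - v(Y)` is centred and `E[(v(X) - v(Y))²] = Var[v(X) - v(Y)] = 2 Var[v(w)]
= 2 (E[u⁴] - E[u²]²)`. Nonnegativity is then read off from (b) and (c).
-/

open MeasureTheory ProbabilityTheory Finset

namespace MeasureTheory

variable {Ω : Type*} {mΩ : MeasurableSpace Ω} {μ : Measure Ω}

lemma MemLp.integrable_pow_of_le_s9 [IsFiniteMeasure μ] {f : Ω → ℝ} {n k : ℕ}
    (hf : MemLp f n μ) (hk : k ≤ n) : Integrable (fun ω ↦ f ω ^ k) μ := by
  have hfk : MemLp f k μ := hf.mono_exponent (by exact_mod_cast hk)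
  refine hfk.integrable_norm_pow'.mono' (hfk.aestronglyMeasurable.pow k) ?_
  filter_upwards with ω using (norm_pow _ _).le

lemma MemLp.memLp_two_sq {f : Ω → ℝ} (hf : MemLp f 4 μ) : MemLp (fun ω ↦ f ω ^ 2) 2 μ := by
  refine (memLp_two_iff_integrable_sq (hf.aestronglyMeasurable.pow 2)).mpr ?_
  simpa [← pow_mul, Even.pow_abs ⟨2, rfl⟩] using hf.integrable_norm_pow (p := 4) (by norm_num)

lemma integral_sub_const_pow {f : Ω → ℝ} (c : ℝ) (n : ℕ)
    (hf : ∀ k ≤ n, Integrable (fun ω ↦ f ω ^ k) μ) :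
    ∫ ω, (f ω - c) ^ n ∂μ
      = ∑ k ∈ range (n + 1), (∫ ω, f ω ^ k ∂μ) * (-c) ^ (n - k) * n.choose k := by
  simp_rw [sub_eq_add_neg, add_pow]
  rw [integral_finsetSum]
  · simp_rw [integral_mul_const]
  · intro k hk
    exact ((hf k (Nat.lt_succ_iff.mp (mem_range.mp hk))).mul_const _).mul_const _

lemma integral_sub_const_sq [IsProbabilityMeasure μ] {f : Ω → ℝ} (hf : MemLp f 2 μ) (c : ℝ) :
    ∫ ω, (f ω - c) ^ 2 ∂μ = ∫ ω, f ω ^ 2 ∂μ - 2 * c * ∫ ω, f ω ∂μ + c ^ 2 := by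
  rw [integral_sub_const_pow c 2 fun k hk ↦ hf.integrable_pow_of_le_s9 hk]
  simp only [sum_range_succ, sum_range_zero, pow_zero, pow_one, integral_const, probReal_univ,
    smul_eq_mul, Nat.choose, Nat.cast_one]
  ring

lemma integral_sub_const_pow_four [IsProbabilityMeasure μ] {f : Ω → ℝ} (hf : MemLp f 4 μ)
    (c : ℝ) :
    ∫ ω, (f ω - c) ^ 4 ∂μ = ∫ ω, f ω ^ 4 ∂μ - 4 * c * ∫ ω, f ω ^ 3 ∂μ
      + 6 * c ^ 2 * ∫ ω, f ω ^ 2 ∂μ - 4 * c ^ 3 * ∫ ω, f ω ∂μ + c ^ 4 := by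
  rw [integral_sub_const_pow c 4 fun k hk ↦ hf.integrable_pow_of_le_s9 hk]
  simp only [sum_range_succ, sum_range_zero, pow_zero, pow_one, integral_const, probReal_univ,
    smul_eq_mul, Nat.choose, Nat.cast_one]
  ring

end MeasureTheory

namespace ProbabilityTheory

variable {Ω : Type*} {mΩ : MeasurableSpace Ω} {μ : Measure Ω}

lemma IndepFun.integral_sub_sq_eq_two_mul_variance [IsFiniteMeasure μ] {A B Z : Ω → ℝ}
    (hAB : IndepFun A B μ) (hA : IdentDistrib A Z μ μ) (hB : IdentDistrib B Z μ μ)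
    (hZ : MemLp Z 2 μ) : ∫ ω, (A ω - B ω) ^ 2 ∂μ = 2 * Var[Z; μ] := by
  have hA2 : MemLp A 2 μ := hA.symm.memLp_snd hZ
  have hB2 : MemLp B 2 μ := hB.symm.memLp_snd hZ
  have hmean : μ[fun ω ↦ A ω - B ω] = 0 := by
    rw [integral_sub (hA2.integrable one_le_two) (hB2.integrable one_le_two), hA.integral_eq,
      hB.integral_eq, sub_self]
  calc ∫ ω, (A ω - B ω) ^ 2 ∂μ = Var[fun ω ↦ A ω - B ω; μ] :=
        (variance_of_integral_eq_zero (hA2.aemeasurable.sub hB2.aemeasurable) hmean).symm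
    _ = 2 * Var[Z; μ] := by
      rw [variance_fun_sub hA2 hB2, hAB.covariance_eq_zero hA2 hB2, hA.variance_eq, hB.variance_eq]
      ring

lemma variance_fun_sq_eq_sub [IsProbabilityMeasure μ] {f : Ω → ℝ} (hf : MemLp f 4 μ) :
    Var[fun ω ↦ f ω ^ 2; μ] = ∫ ω, f ω ^ 4 ∂μ - (∫ ω, f ω ^ 2 ∂μ) ^ 2 := by
  rw [variance_eq_sub hf.memLp_two_sq]
  simp only [Pi.pow_apply, ← pow_mul]

end ProbabilityTheory

/-- For `w` with finite fourth moment and `u = w − J₁` (so `E[u] = 0`):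
(a) `J₂ − J₁² = E[u²]`; (b) `J₄ − 4J₃J₁ + 3J₂² = E[u⁴] + 3(E[u²])²`;
(c) `J₄ − 4J₃J₁ + 3J₂² − 4(J₂ − J₁²)² = (1/2)E[(u(X)² − u(Y)²)²]` for independent copies
`X, Y`; in particular (b) and (c) are nonnegative. -/
theorem centered_moment_identities
    {Ω : Type*} [MeasureSpace Ω] [IsProbabilityMeasure (ℙ : Measure Ω)]
    (w X Y : Ω → ℝ) (J : ℕ → ℝ)
    (hL4 : MemLp w 4 ℙ)
    (hmom : ∀ q : ℕ, q ≤ 4 → (∫ ω, (w ω) ^ q ∂ℙ) = J q)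
    (hXw : IdentDistrib X w ℙ ℙ) (hYw : IdentDistrib Y w ℙ ℙ)
    (hXY : IndepFun X Y ℙ) :
    (J 2 - J 1 ^ 2 = ∫ ω, (w ω - J 1) ^ 2 ∂ℙ)
    ∧ (J 4 - 4 * J 3 * J 1 + 3 * J 2 ^ 2
        = (∫ ω, (w ω - J 1) ^ 4 ∂ℙ) + 3 * (∫ ω, (w ω - J 1) ^ 2 ∂ℙ) ^ 2)
    ∧ (J 4 - 4 * J 3 * J 1 + 3 * J 2 ^ 2 - 4 * (J 2 - J 1 ^ 2) ^ 2
        = (1 / 2) * ∫ ω, ((X ω - J 1) ^ 2 - (Y ω - J 1) ^ 2) ^ 2 ∂ℙ)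
    ∧ 0 ≤ J 4 - 4 * J 3 * J 1 + 3 * J 2 ^ 2
    ∧ 0 ≤ J 4 - 4 * J 3 * J 1 + 3 * J 2 ^ 2 - 4 * (J 2 - J 1 ^ 2) ^ 2 := by
  have hJ1 : ∫ ω, w ω ∂ℙ = J 1 := by simpa using hmom 1 (by norm_num)
  have hvar : ∫ ω, (w ω - J 1) ^ 2 ∂ℙ = J 2 - J 1 ^ 2 := by
    rw [integral_sub_const_sq (hL4.mono_exponent (by norm_num)), hmom 2 (by norm_num), hJ1]
    ring
  have hfourth : ∫ ω, (w ω - J 1) ^ 4 ∂ℙ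
      = J 4 - 4 * J 3 * J 1 + 6 * J 2 * J 1 ^ 2 - 3 * J 1 ^ 4 := by
    rw [integral_sub_const_pow_four hL4, hmom 4 le_rfl, hmom 3 (by norm_num),
      hmom 2 (by norm_num), hJ1]
    ring
  have hg : Measurable fun x : ℝ ↦ (x - J 1) ^ 2 := by fun_prop
  have hu : MemLp (fun ω ↦ w ω - J 1) 4 ℙ := hL4.sub (memLp_const _)
  have hpair : ∫ ω, ((X ω - J 1) ^ 2 - (Y ω - J 1) ^ 2) ^ 2 ∂ℙ
      = 2 * (∫ ω, (w ω - J 1) ^ 4 ∂ℙ - (∫ ω, (w ω - J 1) ^ 2 ∂ℙ) ^ 2) := by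
    rw [← variance_fun_sq_eq_sub hu]
    exact (hXY.comp hg hg).integral_sub_sq_eq_two_mul_variance
      (Z := fun ω ↦ (w ω - J 1) ^ 2) (hXw.comp hg) (hYw.comp hg) hu.memLp_two_sq
  have hb : J 4 - 4 * J 3 * J 1 + 3 * J 2 ^ 2
      = (∫ ω, (w ω - J 1) ^ 4 ∂ℙ) + 3 * (∫ ω, (w ω - J 1) ^ 2 ∂ℙ) ^ 2 := by
    rw [hfourth, hvar]
    ring
  have hc : J 4 - 4 * J 3 * J 1 + 3 * J 2 ^ 2 - 4 * (J 2 - J 1 ^ 2) ^ 2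
      = (1 / 2) * ∫ ω, ((X ω - J 1) ^ 2 - (Y ω - J 1) ^ 2) ^ 2 ∂ℙ := by
    rw [hpair, hfourth, hvar]
    ring
  exact ⟨hvar.symm, hb, hc, hb ▸ by positivity, hc ▸ by positivity⟩
end

section
/- The quantity J_4 − 4J_3J_1 + 3J_2² − 4(J_2 − J_1²)² equals (1/2)∫∫ P(x)P(y)(u(x)² − u(y)²)² dx dy where u(x) = w(x) − J_1, and is therefore nonnegative. -/
open MeasureTheory Finset

/-! The fourth central moment minus the squared variance is the variance of `u²` under `P`,
and the variance of any `g` equals `½ ∫∫ P(x) P(y) (g x - g y)² dx dy`. Expanding `(w - J₁)²` and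
`(w - J₁)⁴` binomially turns the central moments into the raw moments `J_q`. -/

section Moments

variable {Γ : Type*}

lemma mul_sub_pow_eq_sum (P w : Γ → ℝ) (c : ℝ) (n : ℕ) (x : Γ) :
    P x * (w x - c) ^ n
      = ∑ k ∈ range (n + 1), (-c) ^ (n - k) * (n.choose k : ℝ) * (P x * w x ^ k) := by
  rw [sub_eq_add_neg, add_pow, mul_sum]
  exact sum_congr rfl fun _ _ => by ring

variable [MeasurableSpace Γ] {μ : Measure Γ}

lemma integrable_mul_sub_pow {P w : Γ → ℝ} {n : ℕ}
    (hint : ∀ q ≤ n, Integrable (fun x => P x * w x ^ q) μ) (c : ℝ) :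
    Integrable (fun x => P x * (w x - c) ^ n) μ := by
  simp_rw [mul_sub_pow_eq_sum P w c n]
  exact integrable_finsetSum _ fun k hk =>
    (hint k (Nat.lt_succ_iff.mp (mem_range.mp hk))).const_mul _

lemma integral_mul_sub_pow {P w : Γ → ℝ} {n : ℕ}
    (hint : ∀ q ≤ n, Integrable (fun x => P x * w x ^ q) μ) (c : ℝ) :
    ∫ x, P x * (w x - c) ^ n ∂μ
      = ∑ k ∈ range (n + 1), (-c) ^ (n - k) * (n.choose k : ℝ) * ∫ x, P x * w x ^ k ∂μ := by
  simp_rw [mul_sub_pow_eq_sum P w c n]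
  rw [integral_finsetSum _ fun k hk =>
    (hint k (Nat.lt_succ_iff.mp (mem_range.mp hk))).const_mul _]
  simp_rw [integral_const_mul]

lemma integral_prod_mul_mul_sub_sq [SFinite μ] {P g : Γ → ℝ} (hP : Integrable P μ)
    (hPg : Integrable (fun x => P x * g x) μ) (hPg2 : Integrable (fun x => P x * g x ^ 2) μ) :
    ∫ z, P z.1 * P z.2 * (g z.1 - g z.2) ^ 2 ∂μ.prod μ
      = 2 * ((∫ x, P x ∂μ) * (∫ x, P x * g x ^ 2 ∂μ) - (∫ x, P x * g x ∂μ) ^ 2) := by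
  have expand : (fun z : Γ × Γ => P z.1 * P z.2 * (g z.1 - g z.2) ^ 2)
      = fun z => (P z.1 * g z.1 ^ 2) * P z.2 - 2 * ((P z.1 * g z.1) * (P z.2 * g z.2))
          + P z.1 * (P z.2 * g z.2 ^ 2) := by
    funext z; ring
  have h₁ := hPg2.mul_prod hP
  have h₂ := (hPg.mul_prod hPg).const_mul 2
  rw [expand, integral_add ?_ (hP.mul_prod hPg2), integral_sub h₁ h₂,
    integral_const_mul, integral_prod_mul (fun x => P x * g x ^ 2) P,
    integral_prod_mul (fun x => P x * g x) (fun x => P x * g x),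
    integral_prod_mul P (fun x => P x * g x ^ 2)]
  · ring
  · exact h₁.sub h₂

end Moments

theorem quartic_combination_eq_double_integral_general
    {Γ : Type*} [MeasurableSpace Γ] (μ : Measure Γ) [SigmaFinite μ]
    (P w : Γ → ℝ) (J : ℕ → ℝ)
    (hPnonneg : ∀ x, 0 ≤ P x) (hPprob : (∫ x, P x ∂μ) = 1)
    (hint : ∀ q : ℕ, q ≤ 4 → Integrable (fun x => P x * w x ^ q) μ)
    (hmom : ∀ q : ℕ, q ≤ 4 → (∫ x, P x * w x ^ q ∂μ) = J q) :
    (J 4 - 4 * J 3 * J 1 + 3 * J 2 ^ 2 - 4 * (J 2 - J 1 ^ 2) ^ 2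
      = (1 / 2) * ∫ z : Γ × Γ,
          P z.1 * P z.2 * ((w z.1 - J 1) ^ 2 - (w z.2 - J 1) ^ 2) ^ 2 ∂(μ.prod μ))
    ∧ 0 ≤ J 4 - 4 * J 3 * J 1 + 3 * J 2 ^ 2 - 4 * (J 2 - J 1 ^ 2) ^ 2 := by
  have hint_two : ∀ q ≤ 2, Integrable (fun x => P x * w x ^ q) μ := fun q hq => hint q (by omega)
  have hP : Integrable P μ := by simpa using hint 0 (by norm_num)
  have hmean : ∫ x, P x * w x ∂μ = J 1 := by simpa using hmom 1 (by norm_num)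
  have hcentral₂ : ∫ x, P x * (w x - J 1) ^ 2 ∂μ = J 2 - J 1 ^ 2 := by
    rw [integral_mul_sub_pow hint_two]
    norm_num [sum_range_succ, hmom, hmean, hPprob]
    ring
  have hcentral₄ : ∫ x, P x * (w x - J 1) ^ 4 ∂μ
      = J 4 - 4 * J 1 * J 3 + 6 * J 1 ^ 2 * J 2 - 3 * J 1 ^ 4 := by
    rw [integral_mul_sub_pow hint]
    norm_num [sum_range_succ, hmom, hmean, hPprob, Nat.choose]
    ring
  have hsq : ∀ x, P x * ((w x - J 1) ^ 2) ^ 2 = P x * (w x - J 1) ^ 4 := fun x => by ring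
  have hdouble := integral_prod_mul_mul_sub_sq (g := fun x => (w x - J 1) ^ 2) hP
    (integrable_mul_sub_pow hint_two (J 1)) (by simpa only [hsq] using integrable_mul_sub_pow hint (J 1))
  simp only [hsq, hcentral₂, hcentral₄, hPprob] at hdouble
  have heq : J 4 - 4 * J 3 * J 1 + 3 * J 2 ^ 2 - 4 * (J 2 - J 1 ^ 2) ^ 2
      = (1 / 2) * ∫ z : Γ × Γ,
          P z.1 * P z.2 * ((w z.1 - J 1) ^ 2 - (w z.2 - J 1) ^ 2) ^ 2 ∂(μ.prod μ) := by
    rw [hdouble]; ring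
  refine ⟨heq, heq ▸ mul_nonneg (by norm_num) (integral_nonneg fun z => ?_)⟩
  exact mul_nonneg (mul_nonneg (hPnonneg _) (hPnonneg _)) (sq_nonneg _)

/-- With a probability density `P` on `Γ` and moments `J_p = ∫ P(x) w(x)^p dx`,
the quantity `J₄ − 4J₃J₁ + 3J₂² − 4(J₂ − J₁²)²` equals
`(1/2)∫∫ P(x)P(y)(u(x)² − u(y)²)² dx dy` with `u = w − J₁`, hence is nonnegative. -/
theorem quartic_combination_eq_double_integral
    {Γ : Type*} [MeasurableSpace Γ] (μ : Measure Γ) [SigmaFinite μ]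
    (P w : Γ → ℝ) (J : ℕ → ℝ)
    (hPmeas : Measurable P) (hwmeas : Measurable w)
    (hPnonneg : ∀ x, 0 ≤ P x) (hPprob : (∫ x, P x ∂μ) = 1)
    (hint : ∀ q : ℕ, q ≤ 4 → Integrable (fun x => P x * w x ^ q) μ)
    (hmom : ∀ q : ℕ, q ≤ 4 → (∫ x, P x * w x ^ q ∂μ) = J q)
    (hint2 : Integrable (fun z : Γ × Γ =>
        P z.1 * P z.2 * ((w z.1 - J 1) ^ 2 - (w z.2 - J 1) ^ 2) ^ 2) (μ.prod μ)) :
    (J 4 - 4 * J 3 * J 1 + 3 * J 2 ^ 2 - 4 * (J 2 - J 1 ^ 2) ^ 2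
      = (1 / 2) * ∫ z : Γ × Γ,
          P z.1 * P z.2 * ((w z.1 - J 1) ^ 2 - (w z.2 - J 1) ^ 2) ^ 2 ∂(μ.prod μ))
    ∧ 0 ≤ J 4 - 4 * J 3 * J 1 + 3 * J 2 ^ 2 - 4 * (J 2 - J 1 ^ 2) ^ 2 :=
  quartic_combination_eq_double_integral_general μ P w J hPnonneg hPprob hint hmom
end

section
/- If each weight w_j ∈ {0,1} and S_1 = Nb with b ∈ [0,1], then Σ_2 = Σ_4 = N²a with a = b − b², and the estimator E_4 evaluates to E_4 = (1/N^{\underline{4}})((N^{\underline{2}}/N)a − ((4N³−6N²)/N^{\underline{2}})a²), which is strictly negative whenever a > (N−1)²/(N(4N−6)). -/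
/-!
For a `0/1` vector every power sum `S_p` with `p ≥ 1` equals `S_1 = N b`, so both centred
moments collapse to `N² (b - b²)`. Substituting into `E₄` leaves a quadratic in `a` whose
bracket factors as `a / (N - 1) · ((N - 1)² - N (4N - 6) a)`, negative beyond the threshold.
-/

open Finset

theorem Finset.sum_pow_succ_eq_sum_of_isIdempotentElem {ι M : Type*} [Semiring M]
    (s : Finset ι) (w : ι → M) (hw : ∀ j, IsIdempotentElem (w j)) (p : ℕ) :
    ∑ j ∈ s, w j ^ (p + 1) = ∑ j ∈ s, w j :=
  sum_congr rfl fun j _ => (hw j).pow_succ_eq p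

noncomputable def binaryE4 (x a : ℝ) : ℝ :=
  1 / (x * (x - 1) * (x - 2) * (x - 3)) *
    ((x * (x - 1) / x) * a - ((4 * x ^ 3 - 6 * x ^ 2) / (x * (x - 1))) * a ^ 2)

theorem binaryE4_eq {x : ℝ} (hx : 3 < x) (a : ℝ) :
    1 / (x * (x - 1) * (x - 2) * (x - 3) * x ^ 3) *
        (x * (x - 1) * (x ^ 2 * a) - 4 * (x ^ 2 * a) ^ 2)
      + 2 / (x * (x - 1) * (x - 2) * (x - 3) * (x * (x - 1)) * x ^ 2) * (x ^ 2 * a) ^ 2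
      = binaryE4 x a := by
  have h0 : x ≠ 0 := by linarith
  have h1 : x - 1 ≠ 0 := by linarith
  have h2 : x - 2 ≠ 0 := by linarith
  have h3 : x - 3 ≠ 0 := by linarith
  unfold binaryE4
  field_simp
  ring

theorem binaryE4_neg {x a : ℝ} (hx : 3 < x) (ha : (x - 1) ^ 2 / (x * (4 * x - 6)) < a) :
    binaryE4 x a < 0 := by
  have hden : 0 < x * (4 * x - 6) := by nlinarith
  have ha_pos : 0 < a := (div_pos (by nlinarith) hden).trans ha
  have hbracket : (x - 1) ^ 2 - x * (4 * x - 6) * a < 0 := by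
    rw [div_lt_iff₀ hden] at ha
    linarith
  have hfactor : binaryE4 x a = 1 / (x * (x - 1) * (x - 2) * (x - 3)) *
      (a / (x - 1) * ((x - 1) ^ 2 - x * (4 * x - 6) * a)) := by
    have h0 : x ≠ 0 := by linarith
    have h1 : x - 1 ≠ 0 := by linarith
    unfold binaryE4
    field_simp
  have hd4 : 0 < x * (x - 1) * (x - 2) * (x - 3) :=
    mul_pos (mul_pos (mul_pos (by linarith) (by linarith)) (by linarith)) (by linarith)
  have hcoef : 0 < a / (x - 1) := div_pos ha_pos (by linarith)
  rw [hfactor]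
  exact mul_neg_of_pos_of_neg (one_div_pos.mpr hd4) (mul_neg_of_pos_of_neg hcoef hbracket)

/-- Binary-weight counterexample: if every `w_j ∈ {0,1}` and `S₁ = N·b`, then with
`a = b − b²` one has `Σ₂ = Σ₄ = N²a`,
`E₄ = (1/N^{\underline 4})((N^{\underline 2}/N)·a − ((4N³−6N²)/N^{\underline 2})·a²)`,
and `E₄ < 0` whenever `a > (N−1)²/(N(4N−6))`. -/
theorem binary_weights_e4_negative
    (N : ℕ) (hN : 5 ≤ N) (w : Fin N → ℝ) (hw : ∀ j, w j = 0 ∨ w j = 1)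
    (b : ℝ) (hb : (∑ j : Fin N, w j) = N * b) :
    let S : ℕ → ℝ := fun p => ∑ j : Fin N, w j ^ p
    let Sig2 : ℝ := (N : ℝ) * S 2 - S 1 ^ 2
    let Sig4 : ℝ := (N : ℝ) * S 4 - 4 * S 3 * S 1 + 3 * S 2 ^ 2
    let d2 : ℝ := (N : ℝ) * ((N : ℝ) - 1)
    let d4 : ℝ := (N : ℝ) * ((N : ℝ) - 1) * ((N : ℝ) - 2) * ((N : ℝ) - 3)
    let a : ℝ := b - b ^ 2
    let E4 : ℝ := (1 / (d4 * (N : ℝ) ^ 3)) * (d2 * Sig4 - 4 * Sig2 ^ 2)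
        + (2 / (d4 * d2 * (N : ℝ) ^ 2)) * Sig2 ^ 2
    Sig2 = (N : ℝ) ^ 2 * a ∧ Sig4 = (N : ℝ) ^ 2 * a
    ∧ E4 = (1 / d4) * ((d2 / N) * a - ((4 * (N : ℝ) ^ 3 - 6 * (N : ℝ) ^ 2) / d2) * a ^ 2)
    ∧ (((N : ℝ) - 1) ^ 2 / ((N : ℝ) * (4 * (N : ℝ) - 6)) < a → E4 < 0) := by
  intro S Sig2 Sig4 d2 d4 a E4
  have hS (p : ℕ) : S (p + 1) = N * b :=
    (sum_pow_succ_eq_sum_of_isIdempotentElem _ w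
      (fun j => (hw j).elim (fun h => h ▸ .zero) (fun h => h ▸ .one)) p).trans hb
  have hSig2 : Sig2 = (N : ℝ) ^ 2 * a := by
    simp only [Sig2, a, hS 0, hS 1]
    ring
  have hSig4 : Sig4 = (N : ℝ) ^ 2 * a := by
    simp only [Sig4, a, hS 0, hS 1, hS 2, hS 3]
    ring
  have hx : (3 : ℝ) < N := by exact_mod_cast (by omega : 3 < N)
  have hE4 : E4 = binaryE4 N a := by
    simp only [E4, d2, d4, hSig2, hSig4]
    exact binaryE4_eq hx a
  exact ⟨hSig2, hSig4, hE4, fun ha => hE4 ▸ binaryE4_neg hx ha⟩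
end

section
/- The centered third moment satisfies the update rule Q(N) = ((N−1)/N)(q + ((N−2)/N²)u³ − (3p/N)u), where Q(N) = S_3(N)/N − 3S_2(N)S_1(N)/N² + 2S_1(N)³/N³, q = Q(N−1), p = P(N−1), u = w_N − S_1(N−1)/(N−1). -/
/-! Appending `x` to a sample of size `n` adds `x ^ k` to the `k`-th power sum, so the update rule
is an identity between rational functions of `n`, `x` and the three power sums of the old sample. -/

namespace PowerSums

/- The paper's `P` and `Q`, as functions of the sample size and the power sums `s₁, s₂, s₃`. -/
noncomputable def variance (n s₁ s₂ : ℝ) : ℝ := s₂ / n - s₁ ^ 2 / n ^ 2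

noncomputable def thirdCentralMoment (n s₁ s₂ s₃ : ℝ) : ℝ :=
  s₃ / n - 3 * s₂ * s₁ / n ^ 2 + 2 * s₁ ^ 3 / n ^ 3

theorem thirdCentralMoment_add_sample {n : ℝ} (hn : n ≠ 0) (hn₁ : n + 1 ≠ 0)
    (s₁ s₂ s₃ x : ℝ) :
    thirdCentralMoment (n + 1) (s₁ + x) (s₂ + x ^ 2) (s₃ + x ^ 3) =
      n / (n + 1) * (thirdCentralMoment n s₁ s₂ s₃
        + (n - 1) / (n + 1) ^ 2 * (x - s₁ / n) ^ 3
        - 3 * variance n s₁ s₂ / (n + 1) * (x - s₁ / n)) := by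
  unfold thirdCentralMoment variance
  field_simp
  ring

end PowerSums

/-- Update rule for the centered third moment:
`Q(N) = ((N−1)/N)(q + ((N−2)/N²)u³ − (3p/N)u)`. -/
theorem third_moment_update (w : ℕ → ℝ) (N : ℕ) (hN : 2 ≤ N) :
    let S : ℕ → ℕ → ℝ := fun k n => ∑ j ∈ Finset.Icc 1 n, w j ^ k
    let P : ℕ → ℝ := fun n => S 2 n / n - S 1 n ^ 2 / (n : ℝ) ^ 2
    let Q : ℕ → ℝ := fun n =>
      S 3 n / n - 3 * S 2 n * S 1 n / (n : ℝ) ^ 2 + 2 * S 1 n ^ 3 / (n : ℝ) ^ 3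
    let m : ℝ := S 1 (N - 1) / ((N : ℝ) - 1)
    let p : ℝ := P (N - 1)
    let q : ℝ := Q (N - 1)
    let u : ℝ := w N - m
    Q N = (((N : ℝ) - 1) / N)
      * (q + (((N : ℝ) - 2) / (N : ℝ) ^ 2) * u ^ 3 - (3 * p / N) * u) := by
  intro S P Q m p q u
  obtain ⟨n, rfl⟩ : ∃ n, N = n + 1 := ⟨N - 1, by omega⟩
  have hn : (n : ℝ) ≠ 0 := by norm_cast; omega
  have hS : ∀ k, S k (n + 1) = S k n + w (n + 1) ^ k := fun k =>
    Finset.sum_Icc_succ_top (by omega) _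
  have key := PowerSums.thirdCentralMoment_add_sample hn (by positivity)
    (S 1 n) (S 2 n) (S 3 n) (w (n + 1))
  simp only [PowerSums.thirdCentralMoment, PowerSums.variance] at key
  simp only [Q, q, p, P, u, m, hS, Nat.add_sub_cancel, Nat.cast_add, Nat.cast_one,
    add_sub_cancel_right]
  linear_combination key
end

section
/- The quantity R satisfies the update rule R(N) = ((N−1)/N)(R(N−1) + (1/N)(p − ((N−2)/N)u²)² − 4((q/N)u − (p/N²)u²)), where R(N) = S_4(N)/N − 4S_3(N)S_1(N)/N² + 3S_2(N)²/N² − 4P(N)², with p = P(N−1), q = Q(N−1), u = w_N − S_1(N−1)/(N−1). -/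
namespace PowerSum

/-! Statistics of `n` samples expressed through the count `n` and the power sums `sₖ = ∑ wⱼ ^ k`. -/

noncomputable def variance (n s₁ s₂ : ℝ) : ℝ := s₂ / n - s₁ ^ 2 / n ^ 2

noncomputable def thirdCentralMoment (n s₁ s₂ s₃ : ℝ) : ℝ :=
  s₃ / n - 3 * s₂ * s₁ / n ^ 2 + 2 * s₁ ^ 3 / n ^ 3

/-- `μ₄ - μ₂²`, the variance of the squared deviation from the mean. -/
noncomputable def sqDeviationVariance (n s₁ s₂ s₃ s₄ : ℝ) : ℝ :=
  s₄ / n - 4 * s₃ * s₁ / n ^ 2 + 3 * s₂ ^ 2 / n ^ 2 - 4 * variance n s₁ s₂ ^ 2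

theorem sqDeviationVariance_add_sample {n : ℝ} (hn : n ≠ 0) (hn₁ : n - 1 ≠ 0)
    (s₁ s₂ s₃ s₄ x : ℝ) :
    let p := variance (n - 1) s₁ s₂
    let u := x - s₁ / (n - 1)
    sqDeviationVariance n (s₁ + x) (s₂ + x ^ 2) (s₃ + x ^ 3) (s₄ + x ^ 4) =
      ((n - 1) / n) * (sqDeviationVariance (n - 1) s₁ s₂ s₃ s₄
        + (1 / n) * (p - ((n - 2) / n) * u ^ 2) ^ 2
        - 4 * ((thirdCentralMoment (n - 1) s₁ s₂ s₃ / n) * u - (p / n ^ 2) * u ^ 2)) := by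
  intro p u
  simp only [sqDeviationVariance, thirdCentralMoment, variance, p, u]
  field_simp
  ring

end PowerSum

/-- Update rule for `R`:
`R(N) = ((N−1)/N)(R(N−1) + (1/N)(p − ((N−2)/N)u²)² − 4((q/N)u − (p/N²)u²))`. -/
theorem fourth_moment_update (w : ℕ → ℝ) (N : ℕ) (hN : 2 ≤ N) :
    let S : ℕ → ℕ → ℝ := fun k n => ∑ j ∈ Finset.Icc 1 n, w j ^ k
    let P : ℕ → ℝ := fun n => S 2 n / n - S 1 n ^ 2 / (n : ℝ) ^ 2
    let Q : ℕ → ℝ := fun n =>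
      S 3 n / n - 3 * S 2 n * S 1 n / (n : ℝ) ^ 2 + 2 * S 1 n ^ 3 / (n : ℝ) ^ 3
    let R : ℕ → ℝ := fun n =>
      S 4 n / n - 4 * S 3 n * S 1 n / (n : ℝ) ^ 2 + 3 * S 2 n ^ 2 / (n : ℝ) ^ 2
        - 4 * P n ^ 2
    let m : ℝ := S 1 (N - 1) / ((N : ℝ) - 1)
    let p : ℝ := P (N - 1)
    let q : ℝ := Q (N - 1)
    let u : ℝ := w N - m
    R N = (((N : ℝ) - 1) / N)
      * (R (N - 1) + (1 / N) * (p - (((N : ℝ) - 2) / N) * u ^ 2) ^ 2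
          - 4 * ((q / N) * u - (p / (N : ℝ) ^ 2) * u ^ 2)) := by
  intro S P Q R m p q u
  have hS (k : ℕ) : S k N = S k (N - 1) + w N ^ k := by
    obtain ⟨n, rfl⟩ : ∃ n, N = n + 1 := ⟨N - 1, by omega⟩
    exact Finset.sum_Icc_succ_top (by omega) _
  have hcast : ((N - 1 : ℕ) : ℝ) = N - 1 := by
    rw [Nat.cast_sub (by omega : 1 ≤ N), Nat.cast_one]
  have hN₀ : (N : ℝ) ≠ 0 := by positivity
  have hN₁ : (N : ℝ) - 1 ≠ 0 := by
    rw [← hcast]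
    exact Nat.cast_ne_zero.mpr (by omega)
  simp only [R, P, Q, p, q, u, m, hS, pow_one, hcast]
  exact PowerSum.sqDeviationVariance_add_sample hN₀ hN₁ _ _ _ _ _
end
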